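/- arXiv:2006.04022 — 7 statements merged into one kernel-verified Lean document; each statement's English description precedes it below -/
import Mathlib

section
/- Let S be a nonempty closed convex subset of a Hilbert space H, and let x⁰, x ∈ H with x⁰ ∉ S. Define W(x) = {y ∈ H : ⟨y − x, x⁰ − x⟩ ≤ 0}. If S ⊆ W(x), then x lies in the closed ball centered at (x⁰ + x̄)/2 with radius ρ/2, where x̄ = P_S(x⁰) and ρ = ‖x⁰ − P_S(x⁰)‖. -/
open scoped RealInnerProductSpace

/-- `p` is the metric projection of `x` onto `C`. -/
def IsProj {H : Type*} [NormedAddCommGroup H] [InnerProductSpace ℝ H]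
    (C : Set H) (x p : H) : Prop :=
  p ∈ C ∧ ∀ y ∈ C, ‖x - p‖ ≤ ‖x - y‖

/-! The projection `x̄ ∈ S ⊆ W(x)` sees the segment `[x⁰, x̄]` from `x` at a non-acute angle
(`⟪x̄ - x, x⁰ - x⟫ ≤ 0`), and by Thales' theorem this puts `x` in the ball with diameter `[x⁰, x̄]`. -/

section Thales

variable {H : Type*} [NormedAddCommGroup H] [InnerProductSpace ℝ H]

theorem norm_sub_half_smul_add_sq (a b x : H) :
    ‖x - (1 / 2 : ℝ) • (a + b)‖ ^ 2 = (‖a - b‖ / 2) ^ 2 + ⟪a - x, b - x⟫ := by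
  have hmid : x - (1 / 2 : ℝ) • (a + b) = -(1 / 2 : ℝ) • ((a - x) + (b - x)) := by module
  have hdiam : a - b = (a - x) - (b - x) := by abel
  rw [hmid, hdiam]
  generalize a - x = u
  generalize b - x = v
  rw [norm_smul, norm_neg, Real.norm_of_nonneg one_half_pos.le, mul_pow, norm_add_sq_real,
    div_pow ‖u - v‖, norm_sub_sq_real]
  ring

theorem norm_sub_half_smul_add_le_of_inner_nonpos {a b x : H} (h : ⟪a - x, b - x⟫ ≤ 0) :
    ‖x - (1 / 2 : ℝ) • (a + b)‖ ≤ ‖a - b‖ / 2 := by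
  refine (sq_le_sq₀ (norm_nonneg _) (by positivity)).mp ?_
  rw [norm_sub_half_smul_add_sq]
  linarith

end Thales

theorem stmt_1_general {H : Type*} [NormedAddCommGroup H] [InnerProductSpace ℝ H]
    (S : Set H)
    (x0 x xbar : H) (hxbar : IsProj S x0 xbar)
    (hW : S ⊆ {y : H | ⟪y - x, x0 - x⟫ ≤ 0}) :
    ‖x - (1 / 2 : ℝ) • (x0 + xbar)‖ ≤ ‖x0 - xbar‖ / 2 :=
  norm_sub_half_smul_add_le_of_inner_nonpos <| by
    simpa only [Set.mem_ofPred_eq, real_inner_comm] using hW hxbar.1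

theorem stmt_1 {H : Type*} [NormedAddCommGroup H] [InnerProductSpace ℝ H] [CompleteSpace H]
    (S : Set H) (hS : S.Nonempty) (hSc : IsClosed S) (hSv : Convex ℝ S)
    (x0 x xbar : H) (hx0 : x0 ∉ S) (hxbar : IsProj S x0 xbar)
    (hW : S ⊆ {y : H | ⟪y - x, x0 - x⟫ ≤ 0}) :
    ‖x - (1 / 2 : ℝ) • (x0 + xbar)‖ ≤ ‖x0 - xbar‖ / 2 :=
  stmt_1_general S x0 x xbar hxbar hW
end

section
/- Let C be a nonempty closed convex subset of a Hilbert space H, let {x^k} be a sequence in H and u ∈ H. If every weak cluster point of {x^k} belongs to C, and ‖x^k − u‖ ≤ ‖u − P_C(u)‖ for all k, then x^k converges strongly to P_C(u). -/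
open scoped RealInnerProductSpace
open Filter

/-- Weak convergence of a sequence in a real inner product space. -/
def WeakLim {H : Type*} [NormedAddCommGroup H] [InnerProductSpace ℝ H]
    (x : ℕ → H) (a : H) : Prop :=
  ∀ z : H, Tendsto (fun n => ⟪z, x n⟫) atTop (nhds ⟪z, a⟫)

/-- `a` is a weak cluster point of the sequence `x`. -/
def WeakClusterPt {H : Type*} [NormedAddCommGroup H] [InnerProductSpace ℝ H]
    (x : ℕ → H) (a : H) : Prop :=
  ∃ φ : ℕ → ℕ, StrictMono φ ∧ WeakLim (x ∘ φ) a

/-!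
Since `x k - p = (x k - u) + (u - p)`, the bound `‖x k - u‖ ≤ ‖u - p‖` gives
`‖x k - p‖² ≤ 2 ⟪u - p, x k - p⟫`. The sequence is bounded, so every subsequence has a weakly
convergent subsequence; its limit `a` lies in `C`, hence `⟪u - p, a - p⟫ ≤ 0` by the variational
characterisation of the projection. Therefore `limsup ⟪u - p, x k - p⟫ ≤ 0`, and `x k → p`.
-/

open Topology

section

variable {H : Type*} [NormedAddCommGroup H] [InnerProductSpace ℝ H]

/- Sequential Banach–Alaoglu applies on the closed span `K` of the sequence, which is separable;
the weak-* limit is represented by Riesz in `K`, and the orthogonal projection onto `K` transfers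
the convergence to all test vectors of `H`. -/
theorem exists_weakClusterPt_of_isBounded [CompleteSpace H] {x : ℕ → H}
    (hx : Bornology.IsBounded (Set.range x)) : ∃ a, WeakClusterPt x a := by
  obtain ⟨B, hB⟩ := hx.exists_norm_le
  set K := (Submodule.span ℝ (Set.range x)).topologicalClosure
  have hxK : ∀ n, x n ∈ K := fun n =>
    Submodule.le_topologicalClosure _ (Submodule.subset_span ⟨n, rfl⟩)
  have : TopologicalSpace.SeparableSpace K :=
    (Set.countable_range x).isSeparable.span.closure.separableSpace
  have : CompleteSpace K := (Submodule.isClosed_topologicalClosure _).completeSpace_coe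
  let f : ℕ → WeakDual ℝ K := fun n => StrongDual.toWeakDual ((innerSL ℝ (x n)).comp K.subtypeL)
  have hf : ∀ n, f n ∈ WeakDual.toStrongDual ⁻¹' Metric.closedBall 0 B := fun n => by
    refine (mem_closedBall_zero_iff (E := StrongDual ℝ K)).mpr ?_
    calc ‖(innerSL ℝ (x n)).comp K.subtypeL‖
        ≤ ‖innerSL ℝ (x n)‖ * ‖K.subtypeL‖ := ContinuousLinearMap.opNorm_comp_le _ _
      _ ≤ B * 1 := by
        gcongr
        · exact (norm_nonneg _).trans (hB _ ⟨0, rfl⟩)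
        · exact (innerSL_apply_norm ℝ (x n)).trans_le (hB _ ⟨n, rfl⟩)
        · exact Submodule.norm_subtypeL_le K
      _ = B := mul_one B
  obtain ⟨F, -, φ, hφ, hF⟩ := WeakDual.isSeqCompact_closedBall ℝ K 0 B hf
  set a : K := (InnerProductSpace.toDual ℝ K).symm F.toStrongDual
  refine ⟨a, φ, hφ, fun z => ?_⟩
  have hx_inner : ∀ n, ⟪z, x n⟫ = f n (K.orthogonalProjectionOnto z) := fun n => by
    rw [real_inner_comm, ← K.inner_orthogonalProjectionOnto_eq_of_mem_left ⟨x n, hxK n⟩]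
    rfl
  have ha_inner : ⟪z, (a : H)⟫ = F (K.orthogonalProjectionOnto z) := by
    rw [real_inner_comm, ← K.inner_orthogonalProjectionOnto_eq_of_mem_left,
      InnerProductSpace.toDual_symm_apply, WeakDual.toStrongDual_apply]
  rw [ha_inner]
  exact (((WeakDual.eval_continuous _).tendsto F).comp hF).congr fun n => (hx_inner (φ n)).symm

theorem IsProj.inner_sub_le_zero {C : Set H} (hCv : Convex ℝ C) {u p : H} (hp : IsProj C u p)
    {y : H} (hy : y ∈ C) : ⟪u - p, y - p⟫ ≤ 0 := by
  have : Nonempty C := ⟨⟨p, hp.1⟩⟩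
  refine (norm_eq_iInf_iff_real_inner_le_zero hCv hp.1).mp (le_antisymm ?_ ?_) y hy
  · exact le_ciInf fun w => hp.2 w w.2
  · exact ciInf_le (f := fun w : C => ‖u - w‖) ⟨0, by rintro _ ⟨w, rfl⟩; exact norm_nonneg _⟩
      ⟨p, hp.1⟩

theorem norm_sub_sq_le_two_inner_of_norm_sub_le {u p y : H} (h : ‖y - u‖ ≤ ‖u - p‖) :
    ‖y - p‖ ^ 2 ≤ 2 * ⟪u - p, y - p⟫ := by
  have hsplit : ‖y - p‖ ^ 2 = ‖y - u‖ ^ 2 + 2 * ⟪y - u, u - p⟫ + ‖u - p‖ ^ 2 := by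
    rw [← norm_add_sq_real, sub_add_sub_cancel]
  have hinner : ⟪u - p, y - p⟫ = ⟪y - u, u - p⟫ + ‖u - p‖ ^ 2 := by
    rw [← real_inner_self_eq_norm_sq, ← inner_add_left, sub_add_sub_cancel, real_inner_comm]
  have : ‖y - u‖ ^ 2 ≤ ‖u - p‖ ^ 2 := by gcongr
  linarith

theorem eventually_inner_lt_of_forall_weakClusterPt [CompleteSpace H] {x : ℕ → H}
    (hx : Bornology.IsBounded (Set.range x)) {v : H} {c : ℝ}
    (hc : ∀ a, WeakClusterPt x a → ⟪v, a⟫ ≤ c) {ε : ℝ} (hε : 0 < ε) :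
    ∀ᶠ k in atTop, ⟪v, x k⟫ < c + ε := by
  by_contra h
  obtain ⟨ψ, hψ, hψε⟩ := extraction_of_frequently_atTop (not_eventually.mp h)
  obtain ⟨a, φ, hφ, ha⟩ :=
    exists_weakClusterPt_of_isBounded (hx.subset (Set.range_comp_subset_range ψ x))
  have hle : c + ε ≤ ⟪v, a⟫ :=
    ge_of_tendsto (ha v) (Eventually.of_forall fun n => not_lt.mp (hψε (φ n)))
  linarith [hc a ⟨ψ ∘ φ, hψ.comp hφ, ha⟩]

end

theorem stmt_3_general {H : Type*} [NormedAddCommGroup H] [InnerProductSpace ℝ H] [CompleteSpace H]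
    (C : Set H) (hCv : Convex ℝ C)
    (x : ℕ → H) (u p : H) (hp : IsProj C u p)
    (hcluster : ∀ a : H, WeakClusterPt x a → a ∈ C)
    (hbound : ∀ k, ‖x k - u‖ ≤ ‖u - p‖) :
    Tendsto x atTop (nhds p) := by
  have hx : Bornology.IsBounded (Set.range x) :=
    Metric.isBounded_closedBall.subset <|
      Set.range_subset_iff.mpr fun k => mem_closedBall_iff_norm.mpr (hbound k)
  have hc : ∀ a, WeakClusterPt x a → ⟪u - p, a⟫ ≤ ⟪u - p, p⟫ := fun a ha => by
    have := hp.inner_sub_le_zero hCv (hcluster a ha)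
    rwa [inner_sub_right, sub_nonpos] at this
  refine Metric.tendsto_nhds.mpr fun ε hε => ?_
  filter_upwards [eventually_inner_lt_of_forall_weakClusterPt hx hc (half_pos (pow_pos hε 2))]
    with k hk
  have hsq := norm_sub_sq_le_two_inner_of_norm_sub_le (hbound k)
  rw [inner_sub_right] at hsq
  rw [dist_eq_norm]
  exact lt_of_pow_lt_pow_left₀ 2 hε.le (by linarith)

theorem stmt_3 {H : Type*} [NormedAddCommGroup H] [InnerProductSpace ℝ H] [CompleteSpace H]
    (C : Set H) (hC : C.Nonempty) (hCc : IsClosed C) (hCv : Convex ℝ C)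
    (x : ℕ → H) (u p : H) (hp : IsProj C u p)
    (hcluster : ∀ a : H, WeakClusterPt x a → a ∈ C)
    (hbound : ∀ k, ‖x k - u‖ ≤ ‖u - p‖) :
    Tendsto x atTop (nhds p) :=
  stmt_3_general C hCv x u p hp hcluster hbound
end

section
/- Let C be a nonempty closed convex subset of a Hilbert space H and f : C × C → ℝ an equilibrium bifunction such that f(·, y) is upper semicontinuous for each y ∈ C and f(x, ·) is convex and lower semicontinuous for each x ∈ C. Then every solution of the Minty equilibrium problem is a solution of the equilibrium problem; that is, if x* ∈ C satisfies f(y, x*) ≤ 0 for all y ∈ C, then f(x*, y) ≥ 0 for all y ∈ C. -/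
/-!
Fix `y ∈ C` and move along the segment `z t = (1 - t) x* + t y`. Convexity of `f (z t)` together with
`f (z t) (z t) = 0` and the Minty inequality `f (z t) x* ≤ 0` forces `f (z t) y ≥ 0` for `t ∈ (0, 1]`;
letting `t → 0⁺`, upper semicontinuity of `f (·) y` at `x*` passes this bound to `f x* y`.
-/

open Filter Topology

theorem ConvexOn.nonneg_of_apply_segment_eq_zero {E : Type*} [AddCommGroup E] [Module ℝ E]
    {C : Set E} {φ : E → ℝ} (hφ : ConvexOn ℝ C φ) {x y : E} (hx : x ∈ C) (hy : y ∈ C)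
    {t : ℝ} (ht₀ : 0 < t) (ht₁ : t ≤ 1) (hz : φ ((1 - t) • x + t • y) = 0) (hφx : φ x ≤ 0) :
    0 ≤ φ y := by
  have hle := hφ.2 hx hy (sub_nonneg.2 ht₁) ht₀.le (sub_add_cancel 1 t)
  rw [hz, smul_eq_mul, smul_eq_mul] at hle
  have : 0 ≤ t * φ y := by nlinarith
  exact nonneg_of_mul_nonneg_right this ht₀

theorem Convex.tendsto_segment_nhdsWithin_left {E : Type*} [AddCommGroup E] [Module ℝ E]
    [TopologicalSpace E] [ContinuousAdd E] [ContinuousSMul ℝ E] {C : Set E} (hC : Convex ℝ C)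
    {x y : E} (hx : x ∈ C) (hy : y ∈ C) :
    Tendsto (fun t : ℝ => (1 - t) • x + t • y) (𝓝[>] 0) (𝓝[C] x) := by
  refine tendsto_nhdsWithin_iff.2 ⟨?_, ?_⟩
  · have hcont : Continuous fun t : ℝ => (1 - t) • x + t • y := by fun_prop
    simpa using (hcont.tendsto 0).mono_left nhdsWithin_le_nhds
  · filter_upwards [Ioc_mem_nhdsGT (zero_lt_one' ℝ)] with t ht
    exact hC hx hy (sub_nonneg.2 ht.2) ht.1.le (sub_add_cancel 1 t)

theorem UpperSemicontinuousWithinAt.le_of_tendsto {α β : Type*} [TopologicalSpace α]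
    {φ : α → ℝ} {s : Set α} {x : α} (hφ : UpperSemicontinuousWithinAt φ s x)
    {g : β → α} {l : Filter β} [l.NeBot] (hg : Tendsto g l (𝓝[s] x)) {a : ℝ}
    (ha : ∀ᶠ b in l, a ≤ φ (g b)) : a ≤ φ x := by
  by_contra! hlt
  obtain ⟨b, hb, hab⟩ := ((hg.eventually (hφ a hlt)).and ha).exists
  exact hb.not_ge hab

theorem stmt_5_general {H : Type*} [NormedAddCommGroup H] [InnerProductSpace ℝ H]
    (C : Set H) (hCv : Convex ℝ C)
    (f : H → H → ℝ) (hfe : ∀ x ∈ C, f x x = 0)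
    (husc : ∀ y ∈ C, UpperSemicontinuousOn (fun x => f x y) C)
    (hconv : ∀ x ∈ C, ConvexOn ℝ C (f x))
    (xstar : H) (hx : xstar ∈ C) (hMinty : ∀ y ∈ C, f y xstar ≤ 0) :
    ∀ y ∈ C, 0 ≤ f xstar y := by
  intro y hy
  have hz : ∀ t ∈ Set.Ioc (0 : ℝ) 1, (1 - t) • xstar + t • y ∈ C := fun t ht =>
    hCv hx hy (sub_nonneg.2 ht.2) ht.1.le (sub_add_cancel 1 t)
  refine UpperSemicontinuousWithinAt.le_of_tendsto (husc y hy xstar hx)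
    (hCv.tendsto_segment_nhdsWithin_left hx hy) ?_
  filter_upwards [Ioc_mem_nhdsGT (zero_lt_one' ℝ)] with t ht
  exact (hconv _ (hz t ht)).nonneg_of_apply_segment_eq_zero hx hy ht.1 ht.2
    (hfe _ (hz t ht)) (hMinty _ (hz t ht))

theorem stmt_5 {H : Type*} [NormedAddCommGroup H] [InnerProductSpace ℝ H] [CompleteSpace H]
    (C : Set H) (hC : C.Nonempty) (hCc : IsClosed C) (hCv : Convex ℝ C)
    (f : H → H → ℝ) (hfe : ∀ x ∈ C, f x x = 0)
    (husc : ∀ y ∈ C, UpperSemicontinuousOn (fun x => f x y) C)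
    (hconv : ∀ x ∈ C, ConvexOn ℝ C (f x))
    (hlsc : ∀ x ∈ C, LowerSemicontinuousOn (f x) C)
    (xstar : H) (hx : xstar ∈ C) (hMinty : ∀ y ∈ C, f y xstar ≤ 0) :
    ∀ y ∈ C, 0 ≤ f xstar y :=
  stmt_5_general C hCv f hfe husc hconv xstar hx hMinty
end

section
/- Let x⁰ ∈ H and let {x^k} be a sequence in H such that for every k, x^k = P_{W(x^k)}(x⁰) where W(x^k) = {y : ⟨y − x^k, x⁰ − x^k⟩ ≤ 0}, and x^{k+1} ∈ W(x^k). If {x^k} is bounded, then Σ_{k=0}^∞ ‖x^{k+1} − x^k‖² < ∞, and in particular ‖x^{k+1} − x^k‖ → 0. -/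
open scoped RealInnerProductSpace
open Filter

theorem norm_sub_sq_le_of_inner_nonpos {H : Type*} [NormedAddCommGroup H] [InnerProductSpace ℝ H]
    {u v w : H} (h : ⟪u - v, w - v⟫ ≤ 0) :
    ‖u - v‖ ^ 2 ≤ ‖u - w‖ ^ 2 - ‖v - w‖ ^ 2 := by
  have hcos : ‖u - w‖ ^ 2 = ‖u - v‖ ^ 2 - 2 * ⟪u - v, w - v⟫ + ‖w - v‖ ^ 2 := by
    rw [← norm_sub_sq_real, sub_sub_sub_cancel_right]
  rw [hcos, norm_sub_rev w v]
  linarith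

theorem summable_of_le_sub_succ_of_bounded {d a : ℕ → ℝ} {C : ℝ} (hd : ∀ k, 0 ≤ d k)
    (hle : ∀ k, d k ≤ a (k + 1) - a k) (ha : ∀ k, a k ≤ C) : Summable d := by
  refine summable_of_sum_range_le (c := C - a 0) hd fun n => ?_
  calc ∑ k ∈ Finset.range n, d k
      ≤ ∑ k ∈ Finset.range n, (a (k + 1) - a k) := Finset.sum_le_sum fun k _ => hle k
    _ = a n - a 0 := Finset.sum_range_sub a n
    _ ≤ C - a 0 := by linarith [ha n]

theorem norm_sub_sq_le_of_norm_le {E : Type*} [SeminormedAddCommGroup E] {M : ℝ} {y : E}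
    (y0 : E) (hy : ‖y‖ ≤ M) : ‖y - y0‖ ^ 2 ≤ (M + ‖y0‖) ^ 2 := by
  have := norm_sub_le y y0
  gcongr
  linarith

theorem tendsto_zero_of_summable_sq {f : ℕ → ℝ} (hf : ∀ k, 0 ≤ f k)
    (hsum : Summable fun k => f k ^ 2) : Tendsto f atTop (nhds 0) := by
  simpa [Real.sqrt_sq (hf _)] using hsum.tendsto_atTop_zero.sqrt

theorem stmt_10_general {H : Type*} [NormedAddCommGroup H] [InnerProductSpace ℝ H]
    (x0 : H) (x : ℕ → H)
    (hmem : ∀ k, x (k + 1) ∈ {y : H | ⟪y - x k, x0 - x k⟫ ≤ 0})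
    (hbd : ∃ M : ℝ, ∀ k, ‖x k‖ ≤ M) :
    Summable (fun k => ‖x (k + 1) - x k‖ ^ 2) ∧
      Tendsto (fun k => ‖x (k + 1) - x k‖) atTop (nhds 0) := by
  obtain ⟨M, hM⟩ := hbd
  have hsum : Summable fun k => ‖x (k + 1) - x k‖ ^ 2 :=
    summable_of_le_sub_succ_of_bounded (fun _ => by positivity)
      (fun k => norm_sub_sq_le_of_inner_nonpos (hmem k))
      (fun k => norm_sub_sq_le_of_norm_le x0 (hM k))
  exact ⟨hsum, tendsto_zero_of_summable_sq (fun _ => norm_nonneg _) hsum⟩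

theorem stmt_10 {H : Type*} [NormedAddCommGroup H] [InnerProductSpace ℝ H] [CompleteSpace H]
    (x0 : H) (x : ℕ → H)
    (hproj : ∀ k, IsProj {y : H | ⟪y - x k, x0 - x k⟫ ≤ 0} x0 (x k))
    (hmem : ∀ k, x (k + 1) ∈ {y : H | ⟪y - x k, x0 - x k⟫ ≤ 0})
    (hbd : ∃ M : ℝ, ∀ k, ‖x k‖ ≤ M) :
    Summable (fun k => ‖x (k + 1) - x k‖ ^ 2) ∧
      Tendsto (fun k => ‖x (k + 1) - x k‖) atTop (nhds 0) :=
  stmt_10_general x0 x hmem hbd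
end

section
/- With z^k = (1 − θ_k)x^k + θ_k y^k for θ_k ∈ (0,1), g^k ∈ ∂₂f(z^k, z^k), f(z^k, z^k) = 0, and the linesearch inequality f(z^k, y^k) ≤ −(δβ_k/2)‖x^k − y^k‖² with δ, β_k > 0: if additionally ⟨g^k, x^k − z^k⟩ ≤ 0 (i.e., x^k ∈ H_k), then x^k = y^k. -/
open scoped RealInnerProductSpace

/-- `x - z` and `y - z` are opposite multiples of `x - y`: `(1 - θ) • (x - z) + θ • (y - z) = 0`. -/
theorem inner_sub_nonneg_of_inner_sub_nonpos {H : Type*} [NormedAddCommGroup H]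
    [InnerProductSpace ℝ H] {x y z g : H} {θ : ℝ} (hθ : θ ∈ Set.Ioo (0 : ℝ) 1)
    (hz : z = (1 - θ) • x + θ • y) (hx : ⟪g, x - z⟫ ≤ 0) : 0 ≤ ⟪g, y - z⟫ := by
  obtain ⟨hθ0, hθ1⟩ := hθ
  have hcomb : (1 - θ) • (x - z) + θ • (y - z) = 0 := by rw [hz]; module
  have hinner : (1 - θ) * ⟪g, x - z⟫ + θ * ⟪g, y - z⟫ = 0 := by
    rw [← real_inner_smul_right, ← real_inner_smul_right, ← inner_add_right, hcomb, inner_zero_right]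
  nlinarith

theorem stmt_14_general {H : Type*} [NormedAddCommGroup H] [InnerProductSpace ℝ H]
    (f : H → H → ℝ) (x y z g : H) (θ δ β : ℝ)
    (hθ : θ ∈ Set.Ioo (0 : ℝ) 1) (hδ : 0 < δ) (hβ : 0 < β)
    (hz : z = (1 - θ) • x + θ • y)
    (hsub : ∀ w : H, ⟪g, w - z⟫ ≤ f z w - f z z)
    (hzz : f z z = 0)
    (hls : f z y ≤ -(δ * β / 2) * ‖x - y‖ ^ 2)
    (hH : ⟪g, x - z⟫ ≤ 0) :
    x = y := by
  have hchain : 0 ≤ -(δ * β / 2) * ‖x - y‖ ^ 2 :=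
    calc 0 ≤ ⟪g, y - z⟫ := inner_sub_nonneg_of_inner_sub_nonpos hθ hz hH
      _ ≤ f z y - f z z := hsub y
      _ = f z y := by rw [hzz, sub_zero]
      _ ≤ -(δ * β / 2) * ‖x - y‖ ^ 2 := hls
  have hnorm : ‖x - y‖ ^ 2 ≤ 0 := by nlinarith [mul_pos hδ hβ]
  rw [← sub_eq_zero, ← norm_eq_zero]
  exact pow_eq_zero_iff (n := 2) two_ne_zero |>.mp (le_antisymm hnorm (sq_nonneg _))

theorem stmt_14 {H : Type*} [NormedAddCommGroup H] [InnerProductSpace ℝ H] [CompleteSpace H]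
    (f : H → H → ℝ) (x y z g : H) (θ δ β : ℝ)
    (hθ : θ ∈ Set.Ioo (0 : ℝ) 1) (hδ : 0 < δ) (hβ : 0 < β)
    (hz : z = (1 - θ) • x + θ • y)
    (hsub : ∀ w : H, ⟪g, w - z⟫ ≤ f z w - f z z)
    (hzz : f z z = 0)
    (hls : f z y ≤ -(δ * β / 2) * ‖x - y‖ ^ 2)
    (hH : ⟪g, x - z⟫ ≤ 0) :
    x = y :=
  stmt_14_general f x y z g θ δ β hθ hδ hβ hz hsub hzz hls hH
end

section
/- Let g^k ∈ ∂₂f(z^k, z^k), f(z^k, z^k) = 0, z^k = (1 − θ_k)x^k + θ_k y^k with θ_k ∈ (0,1), and suppose f(z^k, y^k) ≤ −(δβ_k/2)‖x^k − y^k‖² with x^k ≠ y^k, δ ∈ (0,1), β_k > 0. Then θ_k⟨g^k, x^k − y^k⟩ ≥ (θ_k/(1 − θ_k))(δβ_k/2)‖x^k − y^k‖² > 0. -/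
open scoped RealInnerProductSpace

section Subgradient

variable {H : Type*} [NormedAddCommGroup H] [InnerProductSpace ℝ H]

lemma inner_sub_convexCombination_right (g x y : H) (θ : ℝ) :
    ⟪g, y - ((1 - θ) • x + θ • y)⟫ = -((1 - θ) * ⟪g, x - y⟫) := by
  have hyz : y - ((1 - θ) • x + θ • y) = -((1 - θ) • (x - y)) := by module
  rw [hyz, inner_neg_right, real_inner_smul_right]

lemma neg_le_one_sub_mul_inner_of_subgradient (f : H → H → ℝ) {x y z g : H} {θ : ℝ}
    (hz : z = (1 - θ) • x + θ • y) (hsub : ∀ w : H, ⟪g, w - z⟫ ≤ f z w) :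
    -f z y ≤ (1 - θ) * ⟪g, x - y⟫ := by
  subst hz
  linarith [hsub y, inner_sub_convexCombination_right g x y θ]

end Subgradient

theorem stmt_16_general {H : Type*} [NormedAddCommGroup H] [InnerProductSpace ℝ H]
    (f : H → H → ℝ) (x y z g : H) (θ δ β : ℝ)
    (hθ : θ ∈ Set.Ioo (0 : ℝ) 1) (hδ : δ ∈ Set.Ioo (0 : ℝ) 1) (hβ : 0 < β)
    (hz : z = (1 - θ) • x + θ • y)
    (hsub : ∀ w : H, ⟪g, w - z⟫ ≤ f z w)
    (hls : f z y ≤ -(δ * β / 2) * ‖x - y‖ ^ 2) (hne : x ≠ y) :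
    θ / (1 - θ) * (δ * β / 2) * ‖x - y‖ ^ 2 ≤ θ * ⟪g, x - y⟫ ∧
      0 < θ / (1 - θ) * (δ * β / 2) * ‖x - y‖ ^ 2 := by
  obtain ⟨hθ0, hθ1⟩ := hθ
  have h1θ : 0 < 1 - θ := sub_pos.mpr hθ1
  have hdecrease : δ * β / 2 * ‖x - y‖ ^ 2 ≤ (1 - θ) * ⟪g, x - y⟫ := by
    linarith [neg_le_one_sub_mul_inner_of_subgradient f hz hsub]
  have hnorm : 0 < ‖x - y‖ := norm_sub_pos_iff.mpr hne
  have hδ0 : 0 < δ := hδ.1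
  refine ⟨?_, by positivity⟩
  calc θ / (1 - θ) * (δ * β / 2) * ‖x - y‖ ^ 2
      = θ / (1 - θ) * (δ * β / 2 * ‖x - y‖ ^ 2) := by ring
    _ ≤ θ / (1 - θ) * ((1 - θ) * ⟪g, x - y⟫) := by gcongr
    _ = θ * ⟪g, x - y⟫ := by field_simp

theorem stmt_16 {H : Type*} [NormedAddCommGroup H] [InnerProductSpace ℝ H] [CompleteSpace H]
    (f : H → H → ℝ) (x y z g : H) (θ δ β : ℝ)
    (hθ : θ ∈ Set.Ioo (0 : ℝ) 1) (hδ : δ ∈ Set.Ioo (0 : ℝ) 1) (hβ : 0 < β)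
    (hz : z = (1 - θ) • x + θ • y)
    (hsub : ∀ w : H, ⟪g, w - z⟫ ≤ f z w) (hzz : f z z = 0)
    (hls : f z y ≤ -(δ * β / 2) * ‖x - y‖ ^ 2) (hne : x ≠ y) :
    θ / (1 - θ) * (δ * β / 2) * ‖x - y‖ ^ 2 ≤ θ * ⟪g, x - y⟫ ∧
      0 < θ / (1 - θ) * (δ * β / 2) * ‖x - y‖ ^ 2 :=
  stmt_16_general f x y z g θ δ β hθ hδ hβ hz hsub hls hne
end

section
/- Let x⁰ ∈ H and {x^k} a sequence with x^k = P_{W(x^k)}(x⁰) for each k, where W(x^k) = {y : ⟨y − x^k, x⁰ − x^k⟩ ≤ 0}. If every weak cluster point of {x^k} lies in the closed convex set D = ∩_{k=0}^∞ W(x^k) (assumed nonempty), then x^k converges strongly to P_D(x⁰). -/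
open scoped RealInnerProductSpace
open Filter

/-! A bounded sequence has weak cluster points (sequential Banach–Alaoglu in the separable
closed span of the sequence), and the norm is weakly sequentially lower semicontinuous. Since
`p ∈ D ⊆ W(x k)` and `x k` is the nearest point of `W(x k)` to `x0`, `‖x0 - x k‖ ≤ ‖x0 - p‖`;
since every weak cluster point `a` lies in `D`, `‖x0 - p‖ ≤ ‖x0 - a‖`. Together these force
`‖x0 - x k‖ → ‖x0 - p‖`, and `⟪p - x k, x0 - x k⟫ ≤ 0` turns this into
`‖x k - p‖² ≤ ‖x0 - p‖² - ‖x0 - x k‖² → 0`. -/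

open scoped Topology

section

variable {H : Type*} [NormedAddCommGroup H] [InnerProductSpace ℝ H]

theorem WeakLim.const_sub {x : ℕ → H} {a : H} (hx : WeakLim x a) (c : H) :
    WeakLim (fun n => c - x n) (c - a) := fun z => by
  simpa only [inner_sub_right] using tendsto_const_nhds.sub (hx z)

theorem WeakClusterPt.of_comp {x : ℕ → H} {φ : ℕ → ℕ} {a : H} (hφ : StrictMono φ)
    (h : WeakClusterPt (x ∘ φ) a) : WeakClusterPt x a :=
  let ⟨ψ, hψ, hlim⟩ := h
  ⟨φ ∘ ψ, hφ.comp hψ, hlim⟩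

theorem WeakLim.norm_le {x : ℕ → H} {a : H} {r : ℝ} (hx : WeakLim x a) (hr : ∀ n, ‖x n‖ ≤ r) :
    ‖a‖ ≤ r := by
  have hlim : Tendsto (fun n => ⟪a, x n⟫) atTop (𝓝 (‖a‖ ^ 2)) := by
    simpa only [real_inner_self_eq_norm_sq] using hx a
  have hsq : ‖a‖ ^ 2 ≤ ‖a‖ * r :=
    le_of_tendsto' hlim fun n =>
      (real_inner_le_norm _ _).trans (mul_le_mul_of_nonneg_left (hr n) (norm_nonneg a))
  nlinarith [norm_nonneg a, (norm_nonneg (x 0)).trans (hr 0)]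

open TopologicalSpace in
theorem exists_weakClusterPt_of_bounded [CompleteSpace H] {x : ℕ → H} {C : ℝ}
    (hb : ∀ n, ‖x n‖ ≤ C) : ∃ a, WeakClusterPt x a := by
  set M := (Submodule.span ℝ (Set.range x)).topologicalClosure
  have hxM : ∀ n, x n ∈ M := fun n =>
    Submodule.le_topologicalClosure _ (Submodule.subset_span ⟨n, rfl⟩)
  have : SeparableSpace M :=
    ((isSeparable_range continuous_of_discreteTopology).span.closure).separableSpace
  let y : ℕ → WeakDual ℝ M := fun n => InnerProductSpace.toDual ℝ M ⟨x n, hxM n⟩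
  have hy : ∀ n, y n ∈ WeakDual.toStrongDual ⁻¹' Metric.closedBall 0 C := fun n =>
    mem_closedBall_zero_iff.mpr (((InnerProductSpace.toDual ℝ M).norm_map _).trans_le (hb n))
  obtain ⟨φ, -, ψ, hψ, hlim⟩ := WeakDual.isSeqCompact_closedBall ℝ M 0 C hy
  refine ⟨(InnerProductSpace.toDual ℝ M).symm (WeakDual.toStrongDual φ), ψ, hψ, fun z => ?_⟩
  -- Testing against `z` is the same as testing against its projection onto `M`.
  have hφz : ⟪z, ((InnerProductSpace.toDual ℝ M).symm (WeakDual.toStrongDual φ) : H)⟫ =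
      φ (M.orthogonalProjectionOnto z) := by
    rw [real_inner_comm, ← M.inner_orthogonalProjectionOnto_eq_of_mem_left,
      InnerProductSpace.toDual_symm_apply]
    rfl
  rw [hφz]
  refine ((WeakDual.eval_continuous _).tendsto φ).comp hlim |>.congr fun n => ?_
  change ⟪(⟨x (ψ n), hxM _⟩ : M), M.orthogonalProjectionOnto z⟫ = _
  rw [M.inner_orthogonalProjectionOnto_eq_of_mem_left, real_inner_comm]
  rfl

theorem tendsto_norm_sub_of_forall_weakClusterPt [CompleteSpace H] {x : ℕ → H} {c : H} {r : ℝ}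
    (hle : ∀ n, ‖c - x n‖ ≤ r) (hge : ∀ a, WeakClusterPt x a → r ≤ ‖c - a‖) :
    Tendsto (fun n => ‖c - x n‖) atTop (𝓝 r) := by
  refine tendsto_order.2 ⟨fun s hs => ?_, fun s hs => .of_forall fun n => (hle n).trans_lt hs⟩
  by_contra hfreq
  obtain ⟨φ, hφ, hφs⟩ := extraction_of_frequently_atTop (not_eventually.1 hfreq)
  have hbd : ∀ n, ‖(x ∘ φ) n‖ ≤ ‖c‖ + r := fun n =>
    calc ‖x (φ n)‖ = ‖c - (c - x (φ n))‖ := by rw [sub_sub_cancel]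
      _ ≤ ‖c‖ + ‖c - x (φ n)‖ := norm_sub_le _ _
      _ ≤ ‖c‖ + r := by gcongr; exact hle _
  obtain ⟨a, hxa⟩ := exists_weakClusterPt_of_bounded hbd
  have hra : r ≤ ‖c - a‖ := hge a (hxa.of_comp hφ)
  obtain ⟨ψ, -, hlim⟩ := hxa
  have has : ‖c - a‖ ≤ s := (hlim.const_sub c).norm_le fun n => not_lt.1 (hφs (ψ n))
  linarith

theorem norm_sub_sq_le_of_inner_nonpos_s17 {c p q : H} (h : ⟪p - q, c - q⟫ ≤ 0) :
    ‖q - p‖ ^ 2 ≤ ‖c - p‖ ^ 2 - ‖c - q‖ ^ 2 := by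
  have hexp : ‖c - p‖ ^ 2 = ‖c - q‖ ^ 2 - 2 * ⟪p - q, c - q⟫ + ‖q - p‖ ^ 2 := by
    rw [← sub_add_sub_cancel c q p, norm_add_sq_real, real_inner_comm, ← neg_sub p q,
      inner_neg_left, norm_neg]
    ring
  linarith

end

theorem stmt_17_general {H : Type*} [NormedAddCommGroup H] [InnerProductSpace ℝ H] [CompleteSpace H]
    (x0 : H) (x : ℕ → H)
    (hproj : ∀ k, IsProj {y : H | ⟪y - x k, x0 - x k⟫ ≤ 0} x0 (x k))
    (D : Set H) (hD : D = ⋂ k, {y : H | ⟪y - x k, x0 - x k⟫ ≤ 0})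
    (hcluster : ∀ a : H, WeakClusterPt x a → a ∈ D)
    (p : H) (hp : IsProj D x0 p) :
    Tendsto x atTop (nhds p) := by
  have hpW : ∀ k, ⟪p - x k, x0 - x k⟫ ≤ 0 := by
    simpa only [hD, Set.mem_iInter, Set.mem_ofPred_eq] using hp.1
  have hnorm : Tendsto (fun k => ‖x0 - x k‖) atTop (𝓝 ‖x0 - p‖) :=
    tendsto_norm_sub_of_forall_weakClusterPt (fun k => (hproj k).2 p (hpW k))
      fun a ha => hp.2 a (hcluster a ha)
  have hgap : Tendsto (fun k => ‖x0 - p‖ ^ 2 - ‖x0 - x k‖ ^ 2) atTop (𝓝 0) := by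
    have := (tendsto_const_nhds (x := ‖x0 - p‖ ^ 2)).sub (hnorm.pow 2)
    rwa [sub_self] at this
  have hsq : Tendsto (fun k => ‖x k - p‖ ^ 2) atTop (𝓝 0) :=
    squeeze_zero (fun k => sq_nonneg _) (fun k => norm_sub_sq_le_of_inner_nonpos_s17 (hpW k)) hgap
  rw [tendsto_iff_norm_sub_tendsto_zero]
  simpa only [Real.sqrt_sq (norm_nonneg _), Real.sqrt_zero] using hsq.sqrt

theorem stmt_17 {H : Type*} [NormedAddCommGroup H] [InnerProductSpace ℝ H] [CompleteSpace H]
    (x0 : H) (x : ℕ → H)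
    (hproj : ∀ k, IsProj {y : H | ⟪y - x k, x0 - x k⟫ ≤ 0} x0 (x k))
    (D : Set H) (hD : D = ⋂ k, {y : H | ⟪y - x k, x0 - x k⟫ ≤ 0})
    (hDne : D.Nonempty)
    (hcluster : ∀ a : H, WeakClusterPt x a → a ∈ D)
    (p : H) (hp : IsProj D x0 p) :
    Tendsto x atTop (nhds p) :=
  stmt_17_general x0 x hproj D hD hcluster p hp
end
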